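/- arXiv:1312.7425 — 2 statements merged into one kernel-verified Lean document; each statement's English description precedes it below -/
import Mathlib

section
/- Let G be a group with finite symmetric generating set X and Λ a finite alphabet, and suppose (G,X,Λ) is graph automatic with respect to a regular normal form L ⊆ Λ*. Then L is a quasigeodesic normal form: there is a constant D such that every u ∈ L satisfies |u|_Λ ≤ D(‖ū‖_X + 1). -/
/-- The convolution of two words `u ∈ A*`, `v ∈ B*`: the word of length
`max |u| |v|` over `Option A × Option B` (with `none` playing the role of the
padding symbol ⋄) whose `i`-th letter is the pair of the `i`-th letters of `u`
and `v`, padded with `none`. -/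
def conv {A B : Type} (u : List A) (v : List B) : List (Option A × Option B) :=
  (List.range (max u.length v.length)).map fun i => (u[i]?, v[i]?)

/-- The multiplier language `L_x` of a normal form `nf : L → G` for the
group element `x`: all convolutions `⊗(u,v)` with `u, v ∈ L` and `ū x = v̄`. -/
def Mult {Λ G : Type} [Group G] (nf : List Λ → G) (L : Language Λ) (x : G) :
    Language (Option Λ × Option Λ) :=
  { w | ∃ u ∈ L, ∃ v ∈ L, nf u * x = nf v ∧ w = conv u v }

/-- The word length (geodesic length) `‖g‖_X` of `g` with respect to a generating set
`X ⊆ G`: the minimal length of a word over `X` whose product is `g`. -/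
noncomputable def wordLength {G : Type} [Group G] (X : Set G) (g : G) : ℕ :=
  sInf { n | ∃ w : List G, (∀ a ∈ w, a ∈ X) ∧ w.length = n ∧ w.prod = g }

/-- A language is regular if it is accepted by a deterministic finite automaton
with finitely many states. -/
def IsRegLang {α : Type} (L : Language α) : Prop :=
  ∃ (σ : Type) (_ : Fintype σ) (M : DFA α σ), M.accepts = L

/-- A class of formal languages: an assignment of a set of languages to each alphabet. -/
def LangClass : Type 1 := (α : Type) → Set (Language α)

/-- The image of a language under the monoid homomorphism `α* → β*` induced by
`f : α → List β`. -/
def homImage {α β : Type} (f : α → List β) (L : Language α) : Language β :=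
  { w | ∃ u ∈ L, w = (u.map f).flatten }

/-- The preimage of a language under the monoid homomorphism `α* → β*` induced by
`f : α → List β`. -/
def homPreimage {α β : Type} (f : α → List β) (L : Language β) : Language α :=
  { u | (u.map f).flatten ∈ L }

/-- `C` is closed under homomorphism. -/
def ClosedUnderHom (C : LangClass) : Prop :=
  ∀ (α β : Type) [Fintype α] [Fintype β], ∀ L ∈ C α, ∀ f : α → List β, homImage f L ∈ C β

/-- `C` is closed under ε-free homomorphism. -/
def ClosedUnderEpsFreeHom (C : LangClass) : Prop :=
  ∀ (α β : Type) [Fintype α] [Fintype β], ∀ L ∈ C α, ∀ f : α → List β,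
    (∀ a, f a ≠ []) → homImage f L ∈ C β

/-- `C` is closed under inverse homomorphism. -/
def ClosedUnderInvHom (C : LangClass) : Prop :=
  ∀ (α β : Type) [Fintype α] [Fintype β], ∀ L ∈ C β, ∀ f : α → List β, homPreimage f L ∈ C α

/-- `C` is closed under (finite) intersection. -/
def ClosedUnderInter (C : LangClass) : Prop :=
  ∀ (α : Type) [Fintype α], ∀ L₁ ∈ C α, ∀ L₂ ∈ C α, L₁ ⊓ L₂ ∈ C α

/-- `C` is closed under intersection with regular languages. -/
def ClosedUnderInterReg (C : LangClass) : Prop :=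
  ∀ (α : Type) [Fintype α], ∀ L ∈ C α, ∀ R : Language α, IsRegLang R → L ⊓ R ∈ C α

/-- `C` contains all regular languages. -/
def ContainsRegular (C : LangClass) : Prop :=
  ∀ (α : Type) [Fintype α], ∀ L : Language α, IsRegLang L → L ∈ C α

/-- `(G,X,Λ)` is `C`-graph automatic via the normal form `L ⊆ Λ*` with bijection
`nf : L → G`: `L ∈ C`, `nf` restricted to `L` is a bijection onto `G`, and every
multiplier language `L_x`, `x ∈ X`, is in `C`. -/
def CGraphAutoWith (C : LangClass) {G : Type} [Group G] (X : Set G) {Λ : Type} [Fintype Λ]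
    (L : Language Λ) (nf : List Λ → G) : Prop :=
  Set.BijOn nf L Set.univ ∧ L ∈ C Λ ∧ ∀ x ∈ X, Mult nf L x ∈ C (Option Λ × Option Λ)

section QGAux

variable {A : Type}

lemma QG.conv_getElem? (u v : List A) (i : ℕ) :
    (conv u v)[i]? = if i < max u.length v.length then some (u[i]?, v[i]?) else none := by
  simp only [conv, List.getElem?_map]
  by_cases h : i < max u.length v.length
  · rw [List.getElem?_range h]; simp [h]
  · rw [List.getElem?_eq_none (by simpa using not_lt.mp h)]; simp [h]

lemma QG.conv_fst (u v : List A) (i : ℕ) : u[i]? = ((conv u v)[i]?).bind Prod.fst := by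
  rw [QG.conv_getElem?]
  split
  · rfl
  · next h =>
    have hle : u.length ≤ i := le_trans (le_max_left _ _) (not_lt.mp h)
    simp [List.getElem?_eq_none hle]

lemma QG.conv_snd (u v : List A) (i : ℕ) : v[i]? = ((conv u v)[i]?).bind Prod.snd := by
  rw [QG.conv_getElem?]
  split
  · rfl
  · next h =>
    have hle : v.length ≤ i := le_trans (le_max_right _ _) (not_lt.mp h)
    simp [List.getElem?_eq_none hle]

lemma QG.conv_inj {u v u' v' : List A} (h : conv u v = conv u' v') : u = u' ∧ v = v' := by
  constructor
  · refine List.ext_getElem? fun n => ?_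
    rw [QG.conv_fst u v n, QG.conv_fst u' v' n, h]
  · refine List.ext_getElem? fun n => ?_
    rw [QG.conv_snd u v n, QG.conv_snd u' v' n, h]

lemma QG.conv_length (u v : List A) : (conv u v).length = max u.length v.length := by
  simp [conv]

lemma QG.conv_split {u v : List A} (h : u.length ≤ v.length) :
    conv u v = conv u (v.take u.length) ++
      (v.drop u.length).map (fun a => ((none : Option A), some a)) := by
  refine List.ext_getElem? fun i => ?_
  have hlen : (v.take u.length).length = u.length := by
    rw [List.length_take]; omega
  rw [List.getElem?_append, QG.conv_getElem?, QG.conv_length, hlen, Nat.max_self]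
  by_cases h1 : i < u.length
  · rw [if_pos h1, QG.conv_getElem?, hlen]
    have : i < max u.length v.length := by omega
    rw [if_pos this, if_pos (by omega), List.getElem?_take, if_pos h1]
  · rw [if_neg h1, List.getElem?_map, List.getElem?_drop]
    have heq : u.length + (i - u.length) = i := by omega
    rw [heq]
    have hu : u[i]? = none := List.getElem?_eq_none (by omega)
    by_cases h2 : i < v.length
    · rw [if_pos (by omega), hu, List.getElem?_eq_getElem h2]
      rfl
    · rw [if_neg (by omega), List.getElem?_eq_none (by omega)]
      rfl

lemma QG.conv_append {u t r : List A} (h : t.length = u.length) :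
    conv u (t ++ r) = conv u t ++ r.map (fun a => ((none : Option A), some a)) := by
  have hle : u.length ≤ (t ++ r).length := by
    rw [List.length_append]; omega
  rw [QG.conv_split hle, ← h, List.take_left, List.drop_left]

lemma QG.map_filterMap {l : List (Option A × Option A)}
    (h : ∀ p ∈ l, ∃ a : A, p = (none, some a)) :
    (l.filterMap Prod.snd).map (fun a => ((none : Option A), some a)) = l := by
  induction l with
  | nil => simp
  | cons p l ih =>
    obtain ⟨a, rfl⟩ := h p (by simp)
    rw [List.filterMap_cons]
    simpa using ih fun q hq => h q (by simp [hq])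

lemma QG.mult_bound {Λ G : Type} [Group G] (nf : List Λ → G) (L : Language Λ) (x : G)
    (hinj : Set.InjOn nf L) (hreg : IsRegLang (Mult nf L x)) :
    ∃ K : ℕ, ∀ u ∈ L, ∀ v ∈ L, nf u * x = nf v → v.length ≤ u.length + K := by
  obtain ⟨σ, inst, M, hM⟩ := hreg
  refine ⟨Fintype.card σ, fun u hu v hv hx => ?_⟩
  by_contra hlen
  push_neg at hlen
  have hle : u.length ≤ v.length := by omega
  set f : Λ → Option Λ × Option Λ := fun a => (none, some a) with hf
  set p := conv u (v.take u.length) with hp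
  set t := (v.drop u.length).map f with ht
  have hconv : conv u v = p ++ t := QG.conv_split hle
  have hmem : conv u v ∈ M.accepts := by
    rw [hM]; exact ⟨u, hu, v, hv, hx, rfl⟩
  set N : DFA (Option Λ × Option Λ) σ := ⟨M.step, M.evalFrom M.start p, M.accept⟩ with hN
  have haccept : ∀ w, (p ++ w) ∈ M.accepts ↔ w ∈ N.accepts := by
    intro w
    rw [DFA.mem_accepts, DFA.mem_accepts]
    show M.evalFrom M.start (p ++ w) ∈ M.accept ↔ N.evalFrom N.start w ∈ M.accept
    rw [DFA.evalFrom_of_append]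
    rfl
  have htacc : t ∈ N.accepts := (haccept t).mp (hconv ▸ hmem)
  have htlen : Fintype.card σ ≤ t.length := by
    have : t.length = v.length - u.length := by
      rw [ht, List.length_map, List.length_drop]
    omega
  obtain ⟨a, b, c, habc, -, hb, hpump⟩ := N.pumping_lemma htacc htlen
  have hac : a ++ c ∈ N.accepts := by
    apply hpump
    refine Language.mem_mul.mpr ⟨a, Language.mem_mul.mpr ⟨a, rfl, [], Language.nil_mem_kstar _, by simp⟩, c, rfl, rfl⟩
  set r := (a ++ c).filterMap Prod.snd with hr
  have hall : ∀ q ∈ a ++ c, ∃ y : Λ, q = ((none : Option Λ), some y) := by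
    intro q hq
    have hqt : q ∈ t := by
      rw [habc]
      rcases List.mem_append.mp hq with h' | h'
      · exact List.mem_append.mpr (Or.inl (List.mem_append.mpr (Or.inl h')))
      · exact List.mem_append.mpr (Or.inr h')
    rw [ht, List.mem_map] at hqt
    obtain ⟨y, -, rfl⟩ := hqt
    exact ⟨y, rfl⟩
  have hmapr : r.map f = a ++ c := QG.map_filterMap hall
  set v' := v.take u.length ++ r with hv'
  have htake : (v.take u.length).length = u.length := by
    rw [List.length_take]; omega
  have hconv' : conv u v' = p ++ (a ++ c) := by
    rw [hv', QG.conv_append htake, hmapr, hp]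
  have hmem' : p ++ (a ++ c) ∈ Mult nf L x := by
    rw [← hM]; exact (haccept _).mpr hac
  obtain ⟨u'', hu'', v'', hv'', hx'', heq⟩ := hmem'
  have heq2 : conv u'' v'' = conv u v' := by rw [← heq, hconv']
  obtain ⟨hueq, hveq⟩ := QG.conv_inj heq2
  rw [hueq, hveq] at hx''
  rw [hveq] at hv''
  have hvv : v' = v := hinj hv'' hv (by rw [← hx'', hx])
  have hrlen : r.length = a.length + c.length := by
    have := congrArg List.length hmapr
    simpa using this
  have hlv' : v'.length = u.length + (a.length + c.length) := by
    rw [hv', List.length_append, htake, hrlen]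
  have hlv : v.length = u.length + (a.length + b.length + c.length) := by
    have h1 : t.length = v.length - u.length := by
      rw [ht, List.length_map, List.length_drop]
    have h2 : t.length = a.length + b.length + c.length := by
      rw [habc]; simp; omega
    omega
  have hbpos : 0 < b.length := List.length_pos_iff.mpr hb
  have := congrArg List.length hvv
  omega

end QGAux

/-- If `(G,X,Λ)` is graph automatic with respect to a regular normal
form `L ⊆ Λ*` (with `X` a finite symmetric generating set of `G`), then `L` is
quasigeodesic: there is a constant `D` with `|u| ≤ D * (‖ū‖_X + 1)` for all `u ∈ L`. -/
theorem graph_automatic_quasigeodesic {Λ : Type} [Fintype Λ] {G : Type} [Group G]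
    (X : Finset G) (hsym : ∀ x ∈ X, x⁻¹ ∈ X)
    (hgen : Subgroup.closure (X : Set G) = ⊤)
    (L : Language Λ) (nf : List Λ → G) (hbij : Set.BijOn nf L Set.univ)
    (hL : IsRegLang L)
    (hmult : ∀ x ∈ X, IsRegLang (Mult nf L x)) :
    ∃ D : ℕ, ∀ u ∈ L, u.length ≤ D * (wordLength (X : Set G) (nf u) + 1) := by
  classical
  obtain ⟨e, he, hnfe⟩ : ∃ e ∈ L, nf e = 1 := by
    obtain ⟨e, he, h⟩ := hbij.surjOn (Set.mem_univ (1 : G))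
    exact ⟨e, he, h⟩
  have hKx : ∀ x ∈ X, ∃ K : ℕ, ∀ u ∈ L, ∀ v ∈ L, nf u * x = nf v → v.length ≤ u.length + K :=
    fun x hx => QG.mult_bound nf L x hbij.injOn (hmult x hx)
  choose K hK using hKx
  set Kmax : ℕ := X.sup (fun x => if h : x ∈ X then K x h else 0) with hKmax
  have hKle : ∀ (x) (hx : x ∈ X), K x hx ≤ Kmax := by
    intro x hx
    have h2 := Finset.le_sup (f := fun x => if h : x ∈ X then K x h else 0) hx
    simp only [dif_pos hx] at h2
    exact h2
  have main : ∀ w : List G, (∀ y ∈ w, y ∈ X) → ∀ u ∈ L, nf u = w.prod →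
      u.length ≤ e.length + Kmax * w.length := by
    intro w
    induction w using List.reverseRecOn with
    | nil =>
      intro _ u hu hprod
      have : u = e := hbij.injOn hu he (by rw [hprod, hnfe, List.prod_nil])
      simp [this]
    | append_singleton w x ih =>
      intro hw u hu hprod
      obtain ⟨u', hu', hnfu'⟩ : ∃ u' ∈ L, nf u' = w.prod := by
        obtain ⟨u', hu', h⟩ := hbij.surjOn (Set.mem_univ w.prod)
        exact ⟨u', hu', h⟩
      have hx : x ∈ X := hw x (by simp)
      have hb := hK x hx u' hu' u hu (by rw [hnfu', hprod, List.prod_append, List.prod_singleton])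
      have hih := ih (fun y hy => hw y (by simp [hy])) u' hu' hnfu'
      have hKle' := hKle x hx
      have harith : Kmax * (w ++ [x]).length = Kmax * w.length + Kmax := by
        rw [List.length_append, List.length_singleton, Nat.mul_add, Nat.mul_one]
      omega
  refine ⟨e.length + Kmax, fun u hu => ?_⟩
  set g := nf u with hg
  have hgmem : g ∈ Submonoid.closure ((X : Set G) ∪ (X : Set G)⁻¹) := by
    have h1 : g ∈ (Subgroup.closure (X : Set G)).toSubmonoid := by
      rw [hgen]; trivial
    rwa [Subgroup.closure_toSubmonoid] at h1
  obtain ⟨w, hwX, hwprod⟩ := Submonoid.exists_list_of_mem_closure hgmem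
  have hwX' : ∀ y ∈ w, y ∈ X := by
    intro y hy
    rcases hwX y hy with h | h
    · exact_mod_cast h
    · have : y⁻¹ ∈ (X : Set G) := Set.mem_inv.mp h
      have := hsym y⁻¹ (by exact_mod_cast this)
      simpa using this
  have hSne : ({n | ∃ w : List G, (∀ a ∈ w, a ∈ (X : Set G)) ∧ w.length = n ∧ w.prod = g} :
      Set ℕ).Nonempty :=
    ⟨w.length, w, fun a ha => by exact_mod_cast hwX' a ha, rfl, hwprod⟩
  obtain ⟨w₀, hw₀X, hw₀len, hw₀prod⟩ := Nat.sInf_mem hSne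
  have hw₀X' : ∀ y ∈ w₀, y ∈ X := fun y hy => by exact_mod_cast hw₀X y hy
  have hmain := main w₀ hw₀X' u hu (by rw [hw₀prod])
  have hwl : wordLength (X : Set G) g = w₀.length := hw₀len.symm
  calc u.length ≤ e.length + Kmax * w₀.length := hmain
    _ ≤ (e.length + Kmax) * (w₀.length + 1) := by nlinarith
    _ = (e.length + Kmax) * (wordLength (X : Set G) (nf u) + 1) := by rw [← hg, hwl]
end

section
/- Let G be a group with two symmetric generating sets X and Y (not necessarily finite), Λ a finite alphabet, and C a class of formal languages that is closed under homomorphism, finite intersection and inverse homomorphism, and contains the regular languages. If (G,X,Λ) is C-graph automatic, then (G,Y,Λ) is C-graph automatic (with the same normal form language L). -/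
/-!
The set of `g ∈ G` whose multiplier language `L_g` lies in `C` contains `X`, so it suffices that
it contains `1` and is closed under inverses and products. `L_1` is the image of `L` under
`a ↦ (a, a)` and `L_{g⁻¹}` is the image of `L_g` under swapping the two tracks. For `L_{gh}`, read
three-track words `⊗(u, m, v)`: those whose tracks `(1,2)` and `(2,3)` lie in `L_g` and `L_h` form
a language in `C`, being an intersection of inverse homomorphic images with a regular language,
and projecting to the tracks `(1,3)` gives `L_{gh}`; surjectivity of the normal form supplies the
middle word `m`, and the convolution of two words determines both of them.
-/

variable {α β γ : Type}

theorem Language.isRegular_of_forall_cons_mem_iff {σ : Type} [Finite σ] (F : σ → Language α)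
    (δ : σ → α → σ) (hF : ∀ s a w, a :: w ∈ F s ↔ w ∈ F (δ s a)) (s : σ) :
    (F s).IsRegular := by
  have := Fintype.ofFinite σ
  refine ⟨σ, inferInstance, ⟨δ, s, {t | [] ∈ F t}⟩, Set.ext fun w => ?_⟩
  induction w generalizing s with
  | nil => rfl
  | cons a w ih => exact (ih (δ s a)).trans (hF s a w).symm

theorem Language.IsRegular.preimage_map {L : Language β} (h : L.IsRegular) (f : α → β) :
    Language.IsRegular (T := α) (List.map f ⁻¹' L) := by
  obtain ⟨σ, _, M, rfl⟩ := h
  exact ⟨σ, inferInstance, M.comap f, M.accepts_comap f⟩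

def pad (n : ℕ) (u : List α) : List (Option α) :=
  (List.range n).map (u[·]?)

theorem length_pad (n : ℕ) (u : List α) : (pad n u).length = n := by
  simp [pad]

theorem pad_succ (n : ℕ) (u : List α) : pad (n + 1) u = u.head? :: pad n u.tail := by
  simp [pad, List.range_succ_eq_map, List.head?_eq_getElem?]

theorem cons_eq_pad_iff {a : Option α} {w : List (Option α)} {n : ℕ} {u : List α} :
    a :: w = pad n u ↔ ∃ m, n = m + 1 ∧ a = u.head? ∧ w = pad m u.tail := by
  cases n with
  | zero => simp [pad]
  | succ m => simp [pad_succ]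

theorem getElem_of_map_eq_pad {f : γ → Option α} {t : List γ} {n : ℕ} {u : List α}
    (h : t.map f = pad n u) (i : ℕ) (hi : i < t.length) : f t[i] = u[i]? := by
  have := List.getElem_of_eq h (by simpa using hi)
  rw [List.getElem_map] at this
  simpa [pad] using this

def paddedWords : Language (Option α) :=
  {w | ∃ n u, u.length ≤ n ∧ w = pad n u}

def paddingWords : Language (Option α) :=
  {w | ∃ n, w = pad n []}

theorem mem_paddedWords {w : List (Option α)} :
    w ∈ paddedWords ↔ ∃ n u, u.length ≤ n ∧ w = pad n u :=
  Iff.rfl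

theorem mem_paddingWords {w : List (Option α)} : w ∈ paddingWords ↔ ∃ n, w = pad n [] :=
  Iff.rfl

theorem cons_mem_paddingWords_iff {a : Option α} {w : List (Option α)} :
    a :: w ∈ paddingWords ↔ a = none ∧ w ∈ paddingWords := by
  simp [mem_paddingWords, cons_eq_pad_iff]

theorem none_cons_mem_paddedWords_iff {w : List (Option α)} :
    none :: w ∈ paddedWords ↔ w ∈ paddingWords := by
  simp only [mem_paddedWords, mem_paddingWords, cons_eq_pad_iff]
  constructor
  · rintro ⟨-, u, -, m, rfl, hu, rfl⟩
    obtain rfl := List.head?_eq_none_iff.1 hu.symm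
    exact ⟨m, rfl⟩
  · rintro ⟨m, rfl⟩
    exact ⟨m + 1, [], by simp, m, rfl, rfl, rfl⟩

theorem some_cons_mem_paddedWords_iff {a : α} {w : List (Option α)} :
    some a :: w ∈ paddedWords ↔ w ∈ paddedWords := by
  simp only [mem_paddedWords, cons_eq_pad_iff]
  constructor
  · rintro ⟨-, u, hu, m, rfl, hhead, rfl⟩
    obtain ⟨t, rfl⟩ := List.head?_eq_some_iff.1 hhead.symm
    exact ⟨m, t, by simpa using hu, rfl⟩
  · rintro ⟨m, u, hu, rfl⟩
    exact ⟨m + 1, a :: u, by simpa, m, rfl, rfl, rfl⟩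

theorem isRegular_paddedWords : (paddedWords : Language (Option α)).IsRegular := by
  -- states: `some false` while reading letters of `u`, `some true` once padding has begun,
  -- `none` after a letter of `u` follows padding
  let F : Option Bool → Language (Option α)
    | none => 0
    | some false => paddedWords
    | some true => paddingWords
  let δ : Option Bool → Option α → Option Bool
    | some _, none => some true
    | some false, some _ => some false
    | _, _ => none
  have hF : ∀ s a w, a :: w ∈ F s ↔ w ∈ F (δ s a) := by
    rintro (_ | _ | _) (_ | c) w <;>
      simp [F, δ, cons_mem_paddingWords_iff, none_cons_mem_paddedWords_iff,
        some_cons_mem_paddedWords_iff]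
  exact Language.isRegular_of_forall_cons_mem_iff F δ hF (some false)

-- `conv u v` is `paddedConv (max u.length v.length) u v`; a longer padding only appends letters
-- `(none, none)`, which `dropPad` deletes.
def paddedConv (n : ℕ) (u : List α) (v : List β) : List (Option α × Option β) :=
  (List.range n).map fun i => (u[i]?, v[i]?)

def dropPad : Option α × Option β → Option (Option α × Option β)
  | (none, none) => none
  | p => some p

theorem getElem?_paddedConv {n : ℕ} {u : List α} {v : List β} (i : ℕ) :
    (paddedConv n u v)[i]? = if i < n then some (u[i]?, v[i]?) else none := by
  split_ifs with hi <;> simp [paddedConv, hi]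

theorem bind_fst_getElem?_conv (u : List α) (v : List β) (i : ℕ) :
    (conv u v)[i]?.bind Prod.fst = u[i]? := by
  rw [conv, ← paddedConv, getElem?_paddedConv]
  split_ifs with hi
  · rfl
  · rw [not_lt, max_le_iff] at hi
    rw [List.getElem?_eq_none hi.1]
    rfl

theorem bind_snd_getElem?_conv (u : List α) (v : List β) (i : ℕ) :
    (conv u v)[i]?.bind Prod.snd = v[i]? := by
  rw [conv, ← paddedConv, getElem?_paddedConv]
  split_ifs with hi
  · rfl
  · rw [not_lt, max_le_iff] at hi
    rw [List.getElem?_eq_none hi.2]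
    rfl

theorem conv_injective {u u' : List α} {v v' : List β} (h : conv u v = conv u' v') :
    u = u' ∧ v = v' :=
  ⟨List.ext_getElem? fun i => by rw [← bind_fst_getElem?_conv u v, h, bind_fst_getElem?_conv],
    List.ext_getElem? fun i => by rw [← bind_snd_getElem?_conv u v, h, bind_snd_getElem?_conv]⟩

theorem conv_self (u : List α) : conv u u = u.map fun a => (some a, some a) := by
  refine List.ext_getElem? fun i => ?_
  rw [conv, ← paddedConv, getElem?_paddedConv]
  split_ifs with hi <;> simp_all

theorem map_swap_conv (u : List α) (v : List β) : (conv u v).map Prod.swap = conv v u := by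
  simp [conv, Nat.max_comm]

theorem flatten_map_singleton (f : α → β) (w : List α) :
    (w.map fun a => [f a]).flatten = w.map f := by
  rw [← List.flatMap_def, List.map_eq_flatMap]

theorem filterMap_dropPad_paddedConv {n : ℕ} {u : List α} {v : List β}
    (hn : max u.length v.length ≤ n) : (paddedConv n u v).filterMap dropPad = conv u v := by
  obtain ⟨k, rfl⟩ := Nat.exists_eq_add_of_le hn
  set m := max u.length v.length
  have hconv : (conv u v).filterMap dropPad = conv u v := by
    refine (List.filterMap_congr fun p hp => ?_).trans List.filterMap_some
    obtain ⟨i, hi, rfl⟩ := List.mem_map.1 hp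
    rw [List.mem_range, lt_max_iff] at hi
    rcases hi with hi | hi <;> simp [dropPad, hi]
  have hpad : ((List.range k).map fun j => (u[m + j]?, v[m + j]?)).filterMap dropPad = [] := by
    refine List.filterMap_eq_nil_iff.2 fun p hp => ?_
    obtain ⟨j, -, rfl⟩ := List.mem_map.1 hp
    rw [List.getElem?_eq_none (by omega), List.getElem?_eq_none (by omega)]
    rfl
  rw [paddedConv, List.range_add, List.map_append, List.filterMap_append, List.map_map]
  exact congrArg₂ (· ++ ·) hconv hpad |>.trans (List.append_nil _)

def dropPadMap (f : γ → Option α × Option β) (l : γ) : List (Option α × Option β) :=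
  (dropPad (f l)).toList

theorem flatten_map_dropPadMap (f : γ → Option α × Option β) (t : List γ) :
    (t.map (dropPadMap f)).flatten = (t.map f).filterMap dropPad := by
  rw [List.filterMap_map, List.filterMap_eq_flatMap_toList, List.flatMap_def]
  rfl

theorem flatten_map_dropPadMap_eq_conv {f : γ → Option α × Option β} {t : List γ} {n : ℕ}
    {u : List α} {v : List β} (ht : t.map f = paddedConv n u v) (hn : max u.length v.length ≤ n) :
    (t.map (dropPadMap f)).flatten = conv u v := by
  rw [flatten_map_dropPadMap, ht, filterMap_dropPad_paddedConv hn]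

def paddedConv3 (n : ℕ) (u : List α) (v : List β) (w : List γ) :
    List (Option α × Option β × Option γ) :=
  (List.range n).map fun i => (u[i]?, v[i]?, w[i]?)

-- Trailing letters `(none, none, none)` are allowed: this makes the language the intersection
-- of the track-wise preimages of `paddedWords`.
def paddedConv3Words : Language (Option α × Option β × Option γ) :=
  {t | ∃ n u v w, u.length ≤ n ∧ v.length ≤ n ∧ w.length ≤ n ∧ t = paddedConv3 n u v w}

theorem paddedConv3Words_eq :
    (paddedConv3Words : Language (Option α × Option β × Option γ)) =
      List.map Prod.fst ⁻¹' paddedWords ⊓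
        (List.map (·.2.1) ⁻¹' paddedWords ⊓ List.map (·.2.2) ⁻¹' paddedWords) := by
  ext t
  constructor
  · rintro ⟨n, u, v, w, hu, hv, hw, rfl⟩
    refine ⟨⟨n, u, hu, ?_⟩, ⟨n, v, hv, ?_⟩, ⟨n, w, hw, ?_⟩⟩ <;> simp [paddedConv3, pad]
  · rintro ⟨⟨n₁, u, hu, h₁⟩, ⟨n₂, v, hv, h₂⟩, ⟨n₃, w, hw, h₃⟩⟩
    obtain rfl : n₁ = t.length := by simpa [length_pad] using (congrArg List.length h₁).symm
    obtain rfl : n₂ = t.length := by simpa [length_pad] using (congrArg List.length h₂).symm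
    obtain rfl : n₃ = t.length := by simpa [length_pad] using (congrArg List.length h₃).symm
    refine ⟨t.length, u, v, w, hu, hv, hw,
      List.ext_getElem (by simp [paddedConv3]) fun i hi _ => ?_⟩
    simp only [paddedConv3, List.getElem_map, List.getElem_range]
    rw [← getElem_of_map_eq_pad h₁ i hi, ← getElem_of_map_eq_pad h₂ i hi,
      ← getElem_of_map_eq_pad h₃ i hi]

theorem isRegular_paddedConv3Words :
    (paddedConv3Words : Language (Option α × Option β × Option γ)).IsRegular := by
  rw [paddedConv3Words_eq]
  exact (isRegular_paddedWords.preimage_map _).inf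
    ((isRegular_paddedWords.preimage_map _).inf (isRegular_paddedWords.preimage_map _))

theorem flatten_map_dropPadMap_paddedConv3 {n : ℕ} {u : List α} {v : List β} {w : List γ}
    (hu : u.length ≤ n) (hv : v.length ≤ n) (hw : w.length ≤ n) :
    ((paddedConv3 n u v w).map (dropPadMap fun l => (l.1, l.2.1))).flatten = conv u v ∧
      ((paddedConv3 n u v w).map (dropPadMap Prod.snd)).flatten = conv v w ∧
      ((paddedConv3 n u v w).map (dropPadMap fun l => (l.1, l.2.2))).flatten = conv u w := by
  refine ⟨flatten_map_dropPadMap_eq_conv ?_ (max_le hu hv),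
    flatten_map_dropPadMap_eq_conv ?_ (max_le hv hw),
    flatten_map_dropPadMap_eq_conv ?_ (max_le hu hw)⟩ <;>
  simp [paddedConv3, paddedConv]

section Multipliers

variable {G Λ : Type} [Group G] {nf : List Λ → G} {L : Language Λ}

theorem conv_mem_mult_iff {x : G} {u v : List Λ} :
    conv u v ∈ Mult nf L x ↔ u ∈ L ∧ v ∈ L ∧ nf u * x = nf v := by
  constructor
  · rintro ⟨u', hu', v', hv', h, he⟩
    obtain ⟨rfl, rfl⟩ := conv_injective he
    exact ⟨hu', hv', h⟩
  · rintro ⟨hu, hv, h⟩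
    exact ⟨u, hu, v, hv, h, rfl⟩

theorem mult_one_eq (hinj : Set.InjOn nf L) :
    Mult nf L 1 = homImage (fun a => [(some a, some a)]) L := by
  ext w
  constructor
  · rintro ⟨u, hu, v, hv, huv, rfl⟩
    obtain rfl := hinj hu hv (by simpa using huv)
    exact ⟨u, hu, by rw [flatten_map_singleton, conv_self]⟩
  · rintro ⟨u, hu, rfl⟩
    exact ⟨u, hu, u, hu, mul_one _, by rw [flatten_map_singleton, conv_self]⟩

theorem mult_inv_eq (g : G) :
    Mult nf L g⁻¹ = homImage (fun p => [p.swap]) (Mult nf L g) := by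
  ext w
  constructor
  · rintro ⟨u, hu, v, hv, huv, rfl⟩
    refine ⟨conv v u, conv_mem_mult_iff.2 ⟨hv, hu, ?_⟩, by rw [flatten_map_singleton, map_swap_conv]⟩
    rw [← huv, inv_mul_cancel_right]
  · rintro ⟨_, ⟨u, hu, v, hv, huv, rfl⟩, rfl⟩
    rw [flatten_map_singleton, map_swap_conv]
    exact conv_mem_mult_iff.2 ⟨hv, hu, by rw [← huv, mul_inv_cancel_right]⟩

theorem mult_mul_eq (hsurj : Set.SurjOn nf L Set.univ) (g h : G) :
    Mult nf L (g * h) = homImage (dropPadMap fun l => (l.1, l.2.2))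
      (homPreimage (dropPadMap fun l => (l.1, l.2.1)) (Mult nf L g) ⊓
        homPreimage (dropPadMap Prod.snd) (Mult nf L h) ⊓ paddedConv3Words) := by
  ext w
  constructor
  · rintro ⟨u, hu, v, hv, huv, rfl⟩
    obtain ⟨m, hm, hnm⟩ := hsurj (Set.mem_univ (nf u * g))
    set n := max (max u.length m.length) v.length
    obtain ⟨h₁₂, h₂₃, h₁₃⟩ := flatten_map_dropPadMap_paddedConv3 (n := n) (u := u) (v := m)
      (w := v) (by omega) (by omega) (by omega)
    refine ⟨paddedConv3 n u m v, ⟨⟨?_, ?_⟩, n, u, m, v, by omega, by omega, by omega, rfl⟩,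
      h₁₃.symm⟩
    · change (List.map _ _).flatten ∈ Mult nf L g
      rw [h₁₂]
      exact conv_mem_mult_iff.2 ⟨hu, hm, hnm.symm⟩
    · change (List.map _ _).flatten ∈ Mult nf L h
      rw [h₂₃]
      exact conv_mem_mult_iff.2 ⟨hm, hv, by rw [hnm, mul_assoc, huv]⟩
  · rintro ⟨_, ⟨⟨hg, hh⟩, n, u, m, v, hu, hm, hv, rfl⟩, rfl⟩
    obtain ⟨h₁₂, h₂₃, h₁₃⟩ := flatten_map_dropPadMap_paddedConv3 hu hm hv
    change (List.map _ _).flatten ∈ Mult nf L g at hg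
    change (List.map _ _).flatten ∈ Mult nf L h at hh
    rw [h₁₂, conv_mem_mult_iff] at hg
    rw [h₂₃, conv_mem_mult_iff] at hh
    rw [h₁₃, conv_mem_mult_iff]
    exact ⟨hg.1, hh.2.1, by rw [← mul_assoc, hg.2.2, hh.2.2]⟩

end Multipliers

theorem mult_mem_of_mem_closure {C : LangClass} (hHom : ClosedUnderHom C)
    (hInter : ClosedUnderInter C) (hInv : ClosedUnderInvHom C) (hReg : ContainsRegular C)
    {G : Type} [Group G] {X : Set G} {Λ : Type} [Fintype Λ] {L : Language Λ}
    {nf : List Λ → G} (hX : CGraphAutoWith C X L nf) {g : G} (hg : g ∈ Subgroup.closure X) :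
    Mult nf L g ∈ C (Option Λ × Option Λ) := by
  obtain ⟨hbij, hL, hmult⟩ := hX
  induction hg using Subgroup.closure_induction with
  | mem x hx => exact hmult x hx
  | one =>
    rw [mult_one_eq hbij.injOn]
    exact hHom _ _ L hL _
  | mul g h _ _ hg hh =>
    rw [mult_mul_eq hbij.surjOn g h]
    exact hHom _ _ _ (hInter _ _ (hInter _ _ (hInv _ _ _ hg _) _ (hInv _ _ _ hh _)) _
      (hReg _ _ isRegular_paddedConv3Words)) _
  | inv g _ hg =>
    rw [mult_inv_eq]
    exact hHom _ _ _ hg _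

theorem change_of_generators_general (C : LangClass) (hHom : ClosedUnderHom C)
    (hInter : ClosedUnderInter C) (hInv : ClosedUnderInvHom C) (hReg : ContainsRegular C)
    {G : Type} [Group G] (X Y : Set G)
    (hgenX : Subgroup.closure X = ⊤)
    {Λ : Type} [Fintype Λ] (L : Language Λ) (nf : List Λ → G)
    (hX : CGraphAutoWith C X L nf) :
    CGraphAutoWith C Y L nf :=
  ⟨hX.1, hX.2.1, fun y _ =>
    mult_mem_of_mem_closure hHom hInter hInv hReg hX (hgenX ▸ Subgroup.mem_top y)⟩

/-- **Change of generators.** Let `C` be a class of formal languages closed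
under homomorphism, finite intersection and inverse homomorphism, and containing the
regular languages. If `(G,X,Λ)` is `C`-graph automatic via the normal form `L`, and `Y`
is another symmetric generating set of `G`, then `(G,Y,Λ)` is `C`-graph automatic via the
same normal form `L`. -/
theorem change_of_generators (C : LangClass) (hHom : ClosedUnderHom C)
    (hInter : ClosedUnderInter C) (hInv : ClosedUnderInvHom C) (hReg : ContainsRegular C)
    {G : Type} [Group G] (X Y : Set G)
    (hsymX : ∀ x ∈ X, x⁻¹ ∈ X) (hgenX : Subgroup.closure X = ⊤)
    (hsymY : ∀ y ∈ Y, y⁻¹ ∈ Y) (hgenY : Subgroup.closure Y = ⊤)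
    {Λ : Type} [Fintype Λ] (L : Language Λ) (nf : List Λ → G)
    (hX : CGraphAutoWith C X L nf) :
    CGraphAutoWith C Y L nf :=
  change_of_generators_general C hHom hInter hInv hReg X Y hgenX L nf hX
end
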